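/- arXiv:2208.05767 — 4 statements merged into one kernel-verified Lean document; each statement's English description precedes it below -/
import Mathlib

section
/- For any p, q ∈ [1/2, 1) with p > q, the KL divergence between Bernoulli distributions satisfies KL(Ber(p) ‖ Ber(q)) ≤ KL(Ber(q) ‖ Ber(p)) ≤ (p−q)²/(p(1−p)). -/
/-!
For the first inequality, write `ψ z = log (1 + z) - log (1 - z) = 2 artanh z`, so that
`log (x / y) = ψ ((x - y) / (x + y))`. With `d = p - q`,
`klBer p q - klBer q p = (p + q) ψ (d / (p + q)) - (2 - p - q) ψ (d / (2 - p - q))`,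
and `s ↦ s ψ (d / s) = ∑ 2 d ^ (2k+1) / ((2k+1) s ^ (2k))` is antitone in `s`, while
`2 - p - q ≤ p + q` because `p + q ≥ 1`.
The second inequality is `KL ≤ χ²`, from `log x ≤ x - 1`.
-/

/-- KL divergence between Bernoulli distributions. -/
noncomputable def klBer (p q : ℝ) : ℝ :=
  p * Real.log (p / q) + (1 - p) * Real.log ((1 - p) / (1 - q))

open Real

/-- The monotonicity of `ψ z / z` on `[0, 1)`, read off the power series of `ψ`. -/
lemma mul_log_one_add_sub_log_one_sub_le {z w : ℝ} (hz : 0 ≤ z) (hzw : z ≤ w) (hw : w < 1) :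
    w * (log (1 + z) - log (1 - z)) ≤ z * (log (1 + w) - log (1 - w)) := by
  have hz1 : |z| < 1 := by rw [abs_of_nonneg hz]; linarith
  have hw1 : |w| < 1 := by rw [abs_of_nonneg (hz.trans hzw)]; exact hw
  refine hasSum_le (fun k => ?_) ((hasSum_log_sub_log_of_abs_lt_one hz1).mul_left w)
    ((hasSum_log_sub_log_of_abs_lt_one hw1).mul_left z)
  have hpow : z ^ (2 * k) ≤ w ^ (2 * k) := pow_le_pow_left₀ hz hzw _
  have hcoef : 0 ≤ 2 * (1 / (2 * (k : ℝ) + 1)) * z * w := by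
    have := hz.trans hzw
    positivity
  calc w * (2 * (1 / (2 * k + 1)) * z ^ (2 * k + 1))
      = 2 * (1 / (2 * k + 1)) * z * w * z ^ (2 * k) := by ring
    _ ≤ 2 * (1 / (2 * k + 1)) * z * w * w ^ (2 * k) := mul_le_mul_of_nonneg_left hpow hcoef
    _ = z * (2 * (1 / (2 * k + 1)) * w ^ (2 * k + 1)) := by ring

lemma log_div_eq_log_one_add_sub_log_one_sub {x y : ℝ} (hx : 0 < x) (hy : 0 < y) :
    log (x / y) = log (1 + (x - y) / (x + y)) - log (1 - (x - y) / (x + y)) := by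
  have hxy : 0 < x + y := by positivity
  have hplus : 1 + (x - y) / (x + y) = 2 * x / (x + y) := by field_simp; ring
  have hminus : 1 - (x - y) / (x + y) = 2 * y / (x + y) := by field_simp; ring
  rw [hplus, hminus, ← log_div (by positivity) (by positivity)]
  congr 1
  field_simp

lemma add_mul_log_div_le_of_sub_eq {x y u v : ℝ} (hy : 0 < y) (hyx : y < x) (hv : 0 < v)
    (hgap : u - v = x - y) (hsum : u + v ≤ x + y) :
    (x + y) * log (x / y) ≤ (u + v) * log (u / v) := by
  have hd : 0 < x - y := sub_pos.2 hyx
  have hxy : 0 < x + y := by linarith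
  have huv : 0 < u + v := by linarith
  rw [log_div_eq_log_one_add_sub_log_one_sub (hy.trans hyx) hy,
    log_div_eq_log_one_add_sub_log_one_sub (by linarith) hv, hgap]
  set A := log (1 + (x - y) / (x + y)) - log (1 - (x - y) / (x + y))
  set B := log (1 + (x - y) / (u + v)) - log (1 - (x - y) / (u + v))
  have key : (x - y) / (u + v) * A ≤ (x - y) / (x + y) * B :=
    mul_log_one_add_sub_log_one_sub_le (by positivity) (div_le_div_of_nonneg_left hd.le huv hsum)
      ((div_lt_one huv).2 (by linarith))
  calc (x + y) * A = (x + y) * (u + v) / (x - y) * ((x - y) / (u + v) * A) := by field_simp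
    _ ≤ (x + y) * (u + v) / (x - y) * ((x - y) / (x + y) * B) :=
      mul_le_mul_of_nonneg_left key (by positivity)
    _ = (u + v) * B := by field_simp

lemma klBer_sub_klBer_swap (p q : ℝ) :
    klBer p q - klBer q p =
      (p + q) * log (p / q) - ((1 - q) + (1 - p)) * log ((1 - q) / (1 - p)) := by
  rw [klBer, klBer, ← inv_div p, ← inv_div (1 - q), log_inv, log_inv]
  ring

lemma mul_log_div_le {a b : ℝ} (ha : 0 ≤ a) (hb : 0 < b) :
    a * log (a / b) ≤ a * (a / b - 1) := by
  rcases ha.eq_or_lt with rfl | ha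
  · simp
  · exact mul_le_mul_of_nonneg_left (log_le_sub_one_of_pos (div_pos ha hb)) ha.le

lemma klBer_le_sq_div {p q : ℝ} (hq0 : 0 ≤ q) (hq1 : q ≤ 1) (hp0 : 0 < p) (hp1 : p < 1) :
    klBer q p ≤ (p - q) ^ 2 / (p * (1 - p)) := by
  have h1p : 0 < 1 - p := by linarith
  have hchi :
      q * (q / p - 1) + (1 - q) * ((1 - q) / (1 - p) - 1) = (p - q) ^ 2 / (p * (1 - p)) := by
    field_simp
    ring
  rw [klBer, ← hchi]
  exact add_le_add (mul_log_div_le hq0 hp0) (mul_log_div_le (by linarith) h1p)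

theorem kl_bernoulli_bounds (p q : ℝ) (hq : 1/2 ≤ q) (hqp : q < p) (hp : p < 1) :
    klBer p q ≤ klBer q p ∧ klBer q p ≤ (p - q)^2 / (p * (1 - p)) := by
  have hq0 : 0 < q := by linarith
  refine ⟨?_, klBer_le_sq_div hq0.le (by linarith) (by linarith) hp⟩
  have hcompare :=
    add_mul_log_div_le_of_sub_eq (u := 1 - q) hq0 hqp (sub_pos.2 hp) (by ring) (by linarith)
  linarith [klBer_sub_klBer_swap p q]
end

section
/- Let X be a random variable on a finite probability space with X ∈ [0, M], σ > 0, and f(λ) := −λ·log E[exp(−X/λ)] − λσ for λ > 0 (extended by f(0) := ess inf X). Then any maximizer λ* of f over [0, ∞) satisfies λ* ≤ M/σ. -/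
/-! Since `X ≤ M`, `E[exp(-X/λ)] ≥ exp(-M/λ)`, so `f(λ) ≤ M - λσ` for `λ > 0`.
As `f(0) = ess inf X ≥ 0`, a maximizer `λ*` must satisfy `0 ≤ M - λ*σ`. -/

open Real

theorem exp_neg_div_le_sum_mul_exp_neg_div {ι : Type*} [Fintype ι]
    {P : ι → ℝ} (hP : ∀ i, 0 ≤ P i) (hPsum : ∑ i, P i = 1)
    {X : ι → ℝ} {M : ℝ} (hXM : ∀ i, X i ≤ M) {lam : ℝ} (hlam : 0 < lam) :
    exp (-M / lam) ≤ ∑ i, P i * exp (-X i / lam) :=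
  calc exp (-M / lam) = ∑ i, P i * exp (-M / lam) := by rw [← Finset.sum_mul, hPsum, one_mul]
    _ ≤ ∑ i, P i * exp (-X i / lam) := Finset.sum_le_sum fun i _ =>
      mul_le_mul_of_nonneg_left
        (exp_le_exp.2 (div_le_div_of_nonneg_right (neg_le_neg (hXM i)) hlam.le)) (hP i)

theorem neg_mul_log_sum_mul_exp_neg_div_le {ι : Type*} [Fintype ι]
    {P : ι → ℝ} (hP : ∀ i, 0 ≤ P i) (hPsum : ∑ i, P i = 1)
    {X : ι → ℝ} {M : ℝ} (hXM : ∀ i, X i ≤ M) {lam : ℝ} (hlam : 0 < lam) :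
    -lam * log (∑ i, P i * exp (-X i / lam)) ≤ M := by
  have hlog : -M / lam ≤ log (∑ i, P i * exp (-X i / lam)) := by
    rw [← log_exp (-M / lam)]
    exact log_le_log (exp_pos _) (exp_neg_div_le_sum_mul_exp_neg_div hP hPsum hXM hlam)
  have := mul_le_mul_of_nonneg_left hlog hlam.le
  rw [mul_div_cancel₀ _ hlam.ne'] at this
  linarith

open Classical in
theorem kl_dual_maximizer_le_general {Ω : Type*} [Fintype Ω]
    (P : Ω → ℝ) (hP : ∀ ω, 0 ≤ P ω) (hPsum : ∑ ω, P ω = 1)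
    (X : Ω → ℝ) (M : ℝ) (hX : ∀ ω, X ω ∈ Set.Icc 0 M)
    (σ : ℝ) (hσ : 0 < σ)
    (e : ℝ) (he1 : ∃ ω, 0 < P ω ∧ X ω = e)
    (lamStar : ℝ)
    (hmax : ∀ lam : ℝ, 0 ≤ lam →
      (if lam = 0 then e
        else -lam * Real.log (∑ ω, P ω * Real.exp (-X ω / lam)) - lam * σ) ≤
      (if lamStar = 0 then e
        else -lamStar * Real.log (∑ ω, P ω * Real.exp (-X ω / lamStar)) - lamStar * σ)) :
    lamStar ≤ M / σ := by
  obtain ⟨ω₀, -, rfl⟩ := he1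
  obtain ⟨hX₀, hX₀M⟩ := hX ω₀
  rcases le_or_gt lamStar 0 with hle | hpos
  · exact hle.trans (div_nonneg (hX₀.trans hX₀M) hσ.le)
  · have hf0 := hmax 0 le_rfl
    rw [if_pos rfl, if_neg hpos.ne'] at hf0
    have hbound := neg_mul_log_sum_mul_exp_neg_div_le hP hPsum (fun ω => (hX ω).2) hpos
    rw [le_div_iff₀ hσ]
    linarith

open Classical in
/-- Any maximizer over `[0, ∞)` of the KL dual objective
`f(λ) = -λ log E[exp(-X/λ)] - λσ` (with `f(0) := ess inf X =: e`) satisfies `λ* ≤ M/σ`,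
for a random variable `X ∈ [0, M]` on a finite probability space with pmf `P`. -/
theorem kl_dual_maximizer_le {Ω : Type*} [Fintype Ω]
    (P : Ω → ℝ) (hP : ∀ ω, 0 ≤ P ω) (hPsum : ∑ ω, P ω = 1)
    (X : Ω → ℝ) (M : ℝ) (hX : ∀ ω, X ω ∈ Set.Icc 0 M)
    (σ : ℝ) (hσ : 0 < σ)
    (e : ℝ) (he1 : ∃ ω, 0 < P ω ∧ X ω = e) (he2 : ∀ ω, 0 < P ω → e ≤ X ω)
    (lamStar : ℝ) (hlam : 0 ≤ lamStar)
    (hmax : ∀ lam : ℝ, 0 ≤ lam →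
      (if lam = 0 then e
        else -lam * Real.log (∑ ω, P ω * Real.exp (-X ω / lam)) - lam * σ) ≤
      (if lamStar = 0 then e
        else -lamStar * Real.log (∑ ω, P ω * Real.exp (-X ω / lamStar)) - lamStar * σ)) :
    lamStar ≤ M / σ :=
  kl_dual_maximizer_le_general P hP hPsum X M hX σ hσ e he1 lamStar hmax
end

section
/- Let X be a random variable on a finite probability space with X ∈ [0,M] and σ > 0. If log P(X = ess inf X) + σ ≥ 0, then sup_{λ > 0} ( −λ·log E[exp(−X/λ)] − λσ ) is attained in the limit λ → 0 and equals ess inf X. -/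
/-!
Write `E(λ) = ∑ P ω exp(-X ω / λ)` and `p = P(X = e)`. Since `X ≥ e` almost surely and
`X = e` with probability `p`, we have `p exp(-e/λ) ≤ E(λ) ≤ exp(-e/λ)`, hence
`e - λσ ≤ -λ log E(λ) - λσ ≤ e - λ (log p + σ) ≤ e`. The objective is therefore bounded by `e`
and tends to `e` as `λ → 0⁺`, so its supremum is `e`.
-/

open Filter Topology

noncomputable def klDual {Ω : Type*} [Fintype Ω] (P X : Ω → ℝ) (σ lam : ℝ) : ℝ :=
  -lam * Real.log (∑ ω, P ω * Real.exp (-X ω / lam)) - lam * σ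

lemma le_neg_mul_log_of_le_exp_neg_div {lam E e : ℝ} (hlam : 0 < lam) (hE : 0 < E)
    (h : E ≤ Real.exp (-e / lam)) : e ≤ -lam * Real.log E := by
  have hlog : Real.log E ≤ -e / lam := by simpa using Real.log_le_log hE h
  have := mul_le_mul_of_nonneg_left hlog hlam.le
  rw [mul_div_cancel₀ _ hlam.ne'] at this
  linarith

lemma neg_mul_log_le_of_mul_exp_neg_div_le {lam E e p : ℝ} (hlam : 0 < lam) (hp : 0 < p)
    (h : p * Real.exp (-e / lam) ≤ E) : -lam * Real.log E ≤ e - lam * Real.log p := by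
  have hlog : Real.log p + -e / lam ≤ Real.log E := by
    simpa [Real.log_mul hp.ne' (Real.exp_ne_zero _)] using
      Real.log_le_log (by positivity) h
  have := mul_le_mul_of_nonneg_left hlog hlam.le
  rw [mul_add, mul_div_cancel₀ _ hlam.ne'] at this
  linarith

section FiniteSum

variable {Ω : Type*} [Fintype Ω] {P X : Ω → ℝ} {e : ℝ}

open Classical in
lemma mass_mul_exp_le_sum_mul_exp (hP : ∀ ω, 0 ≤ P ω) (lam : ℝ) :
    (∑ ω, if X ω = e then P ω else 0) * Real.exp (-e / lam) ≤
      ∑ ω, P ω * Real.exp (-X ω / lam) := by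
  rw [Finset.sum_mul]
  refine Finset.sum_le_sum fun ω _ => ?_
  split_ifs with h
  · rw [h]
  · rw [zero_mul]
    exact mul_nonneg (hP ω) (Real.exp_nonneg _)

lemma sum_mul_exp_le_exp_neg_div (hP : ∀ ω, 0 ≤ P ω) (hPsum : ∑ ω, P ω = 1)
    (he : ∀ ω, 0 < P ω → e ≤ X ω) {lam : ℝ} (hlam : 0 < lam) :
    ∑ ω, P ω * Real.exp (-X ω / lam) ≤ Real.exp (-e / lam) := by
  calc ∑ ω, P ω * Real.exp (-X ω / lam)
      ≤ ∑ ω, P ω * Real.exp (-e / lam) := by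
        refine Finset.sum_le_sum fun ω _ => ?_
        rcases (hP ω).eq_or_lt with h | h
        · simp [← h]
        · gcongr
          exact he ω h
    _ = Real.exp (-e / lam) := by rw [← Finset.sum_mul, hPsum, one_mul]

open Classical in
lemma mass_pos (hP : ∀ ω, 0 ≤ P ω) (he : ∃ ω, 0 < P ω ∧ X ω = e) :
    0 < ∑ ω, if X ω = e then P ω else 0 := by
  obtain ⟨ω₀, hω₀P, hω₀X⟩ := he
  calc 0 < if X ω₀ = e then P ω₀ else 0 := by rwa [if_pos hω₀X]
    _ ≤ ∑ ω, if X ω = e then P ω else 0 :=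
      Finset.single_le_sum (f := fun ω => if X ω = e then P ω else 0)
        (fun ω _ => by split_ifs <;> simp [hP ω]) (Finset.mem_univ ω₀)

lemma sub_mul_le_klDual (hP : ∀ ω, 0 ≤ P ω) (hPsum : ∑ ω, P ω = 1)
    (he1 : ∃ ω, 0 < P ω ∧ X ω = e) (he2 : ∀ ω, 0 < P ω → e ≤ X ω) (σ : ℝ) {lam : ℝ}
    (hlam : 0 < lam) : e - lam * σ ≤ klDual P X σ lam := by
  have hE := (mul_pos (mass_pos hP he1) (Real.exp_pos (-e / lam))).trans_le
    (mass_mul_exp_le_sum_mul_exp hP lam)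
  have := le_neg_mul_log_of_le_exp_neg_div hlam hE (sum_mul_exp_le_exp_neg_div hP hPsum he2 hlam)
  unfold klDual
  linarith

open Classical in
lemma klDual_le (hP : ∀ ω, 0 ≤ P ω) (he : ∃ ω, 0 < P ω ∧ X ω = e) {σ : ℝ}
    (hcond : 0 ≤ Real.log (∑ ω, if X ω = e then P ω else 0) + σ) {lam : ℝ} (hlam : 0 < lam) :
    klDual P X σ lam ≤ e := by
  have := neg_mul_log_le_of_mul_exp_neg_div_le hlam (mass_pos hP he)
    (mass_mul_exp_le_sum_mul_exp hP lam)
  have := mul_nonneg hlam.le hcond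
  unfold klDual
  nlinarith

open Classical in
lemma tendsto_klDual_nhdsGT_zero (hP : ∀ ω, 0 ≤ P ω) (hPsum : ∑ ω, P ω = 1)
    (he1 : ∃ ω, 0 < P ω ∧ X ω = e) (he2 : ∀ ω, 0 < P ω → e ≤ X ω) {σ : ℝ}
    (hcond : 0 ≤ Real.log (∑ ω, if X ω = e then P ω else 0) + σ) :
    Tendsto (klDual P X σ) (𝓝[>] 0) (𝓝 e) := by
  have hlower : Tendsto (fun lam : ℝ => e - lam * σ) (𝓝[>] 0) (𝓝 e) := by
    have : Continuous fun lam : ℝ => e - lam * σ := by fun_prop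
    simpa using (this.tendsto 0).mono_left nhdsWithin_le_nhds
  refine tendsto_of_tendsto_of_tendsto_of_le_of_le' hlower tendsto_const_nhds ?_ ?_
  · filter_upwards [self_mem_nhdsWithin] with lam hlam
    exact sub_mul_le_klDual hP hPsum he1 he2 σ hlam
  · filter_upwards [self_mem_nhdsWithin] with lam hlam
    exact klDual_le hP he1 hcond hlam

end FiniteSum

open Classical in
theorem kl_dual_sup_eq_essInf_general {Ω : Type*} [Fintype Ω]
    (P : Ω → ℝ) (hP : ∀ ω, 0 ≤ P ω) (hPsum : ∑ ω, P ω = 1)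
    (X : Ω → ℝ)
    (σ : ℝ)
    (e : ℝ) (he1 : ∃ ω, 0 < P ω ∧ X ω = e) (he2 : ∀ ω, 0 < P ω → e ≤ X ω)
    (hcond : 0 ≤ Real.log (∑ ω, if X ω = e then P ω else 0) + σ) :
    sSup ((fun lam : ℝ =>
        -lam * Real.log (∑ ω, P ω * Real.exp (-X ω / lam)) - lam * σ) '' Set.Ioi 0) = e := by
  change sSup (klDual P X σ '' Set.Ioi 0) = e
  refine (isLUB_of_mem_closure ?_ ?_).csSup_eq (Set.image_nonempty.mpr Set.nonempty_Ioi)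
  · rintro _ ⟨lam, hlam, rfl⟩
    exact klDual_le hP he1 hcond hlam
  · exact mem_closure_of_tendsto (tendsto_klDual_nhdsGT_zero hP hPsum he1 he2 hcond)
      (eventually_mem_nhdsWithin.mono fun _ hlam => Set.mem_image_of_mem _ hlam)

open Classical in
/-- If `log P(X = ess inf X) + σ ≥ 0`, then the supremum over `λ > 0` of the KL dual
objective `-λ log E[exp(-X/λ)] - λσ` is attained in the limit `λ → 0` and equals
the essential infimum `e` of `X`. -/
theorem kl_dual_sup_eq_essInf {Ω : Type*} [Fintype Ω]
    (P : Ω → ℝ) (hP : ∀ ω, 0 ≤ P ω) (hPsum : ∑ ω, P ω = 1)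
    (X : Ω → ℝ) (M : ℝ) (hX : ∀ ω, X ω ∈ Set.Icc 0 M)
    (σ : ℝ) (hσ : 0 < σ)
    (e : ℝ) (he1 : ∃ ω, 0 < P ω ∧ X ω = e) (he2 : ∀ ω, 0 < P ω → e ≤ X ω)
    (hcond : 0 ≤ Real.log (∑ ω, if X ω = e then P ω else 0) + σ) :
    sSup ((fun lam : ℝ =>
        -lam * Real.log (∑ ω, P ω * Real.exp (-X ω / lam)) - lam * σ) '' Set.Ioi 0) = e :=
  kl_dual_sup_eq_essInf_general P hP hPsum X σ e he1 he2 hcond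
end

section
/- Let S, A be finite sets, γ ∈ [0,1), r: S×A → [0,1], and for each (s,a) let U(s,a) be a nonempty set of probability distributions on S, and b: S×A → [0, ∞). Define the operator T on Q: S×A → [0, 1/(1−γ)] by T(Q)(s,a) := max{ r(s,a) + γ·inf_{P ∈ U(s,a)} ∑_{s'} P(s')·max_{a'} Q(s',a') − b(s,a), 0 }. Then T is a γ-contraction in the sup norm: ‖T(Q₁) − T(Q₂)‖_∞ ≤ γ‖Q₁ − Q₂‖_∞ for all Q₁, Q₂ with values in [0, 1/(1−γ)]. -/
/-!
Each ingredient of the operator is 1-Lipschitz in the sup norm: `max · 0`, the maximum over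
actions, the average against a probability vector `P`, and the infimum over `P ∈ U(s,a)`. The
factor `γ ≥ 0` in front of the infimum then turns this into a `γ`-contraction.
-/

/-- The pessimistic robust Bellman operator: `T(Q)(s,a) =
max{ r(s,a) + γ inf_{P ∈ U(s,a)} ∑_{s'} P(s') max_{a'} Q(s',a') - b(s,a), 0 }`. -/
noncomputable def pessBellman {S A : Type*} [Fintype S] [Fintype A]
    (γ : ℝ) (r : S → A → ℝ) (U : S → A → Set (S → ℝ)) (b : S → A → ℝ)
    (Q : S → A → ℝ) : S → A → ℝ :=
  fun s a =>
    max (r s a + γ * sInf ((fun P : S → ℝ => ∑ s', P s' * ⨆ a', Q s' a') '' U s a) - b s a) 0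

open Set

namespace Real

variable {ι : Type*} {f g : ι → ℝ} {M : ℝ}

lemma iInf_eq_neg_iSup_neg (f : ι → ℝ) : ⨅ i, f i = -⨆ i, -f i := by
  rw [iInf, iSup, Real.sInf_def, Set.neg_range]

-- `0 ≤ M` is what covers the junk value `0` of both suprema (`ι` empty or `g` unbounded above).
lemma abs_iSup_sub_iSup_le (hM : 0 ≤ M) (h : ∀ i, |f i - g i| ≤ M) :
    |(⨆ i, f i) - ⨆ i, g i| ≤ M := by
  rcases isEmpty_or_nonempty ι with hι | hι
  · simpa using hM
  have hfg : ∀ i, f i ≤ g i + M := fun i => by linarith [(abs_le.1 (h i)).2]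
  have hgf : ∀ i, g i ≤ f i + M := fun i => by linarith [(abs_le.1 (h i)).1]
  have bdd_of_le_add : ∀ {u v : ι → ℝ}, (∀ i, u i ≤ v i + M) → BddAbove (range v) →
      BddAbove (range u) := fun huv ⟨c, hc⟩ =>
    ⟨c + M, forall_mem_range.2 fun i => (huv i).trans (by linarith [hc (mem_range_self i)])⟩
  by_cases hg : BddAbove (range g)
  · have hf := bdd_of_le_add hfg hg
    rw [abs_sub_le_iff, sub_le_iff_le_add', sub_le_iff_le_add']
    exact ⟨ciSup_le fun i => (hfg i).trans (by linarith [le_ciSup hg i]),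
      ciSup_le fun i => (hgf i).trans (by linarith [le_ciSup hf i])⟩
  · have hf : ¬BddAbove (range f) := fun hf => hg (bdd_of_le_add hgf hf)
    rw [iSup_of_not_bddAbove hf, iSup_of_not_bddAbove hg]
    simpa using hM

lemma abs_iInf_sub_iInf_le (hM : 0 ≤ M) (h : ∀ i, |f i - g i| ≤ M) :
    |(⨅ i, f i) - ⨅ i, g i| ≤ M := by
  rw [iInf_eq_neg_iSup_neg f, iInf_eq_neg_iSup_neg g, neg_sub_neg]
  exact abs_iSup_sub_iSup_le hM fun i => by rw [neg_sub_neg]; exact h i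

lemma abs_sInf_image_sub_sInf_image_le {α : Type*} {f g : α → ℝ} {s : Set α} (hM : 0 ≤ M)
    (h : ∀ x ∈ s, |f x - g x| ≤ M) : |sInf (f '' s) - sInf (g '' s)| ≤ M := by
  rw [sInf_image', sInf_image']
  exact abs_iInf_sub_iInf_le hM fun x => h x x.2

end Real

lemma Finset.abs_sum_mul_sub_sum_mul_le {ι : Type*} {s : Finset ι} {w x y : ι → ℝ} {M : ℝ}
    (hw : ∀ i ∈ s, 0 ≤ w i) (hw₁ : ∑ i ∈ s, w i = 1) (h : ∀ i ∈ s, |x i - y i| ≤ M) :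
    |∑ i ∈ s, w i * x i - ∑ i ∈ s, w i * y i| ≤ M := by
  calc |∑ i ∈ s, w i * x i - ∑ i ∈ s, w i * y i|
      = |∑ i ∈ s, w i * (x i - y i)| := by simp only [mul_sub, Finset.sum_sub_distrib]
    _ ≤ ∑ i ∈ s, |w i * (x i - y i)| := Finset.abs_sum_le_sum_abs _ _
    _ ≤ ∑ i ∈ s, w i * M := Finset.sum_le_sum fun i hi => by
        rw [abs_mul, abs_of_nonneg (hw i hi)]
        exact mul_le_mul_of_nonneg_left (h i hi) (hw i hi)
    _ = M := by rw [← Finset.sum_mul, hw₁, one_mul]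

lemma abs_pessBellman_sub_le {S A : Type*} [Fintype S] [Fintype A] {γ M : ℝ} (hγ : 0 ≤ γ)
    (hM : 0 ≤ M) (r : S → A → ℝ) (U : S → A → Set (S → ℝ)) (b : S → A → ℝ) {s : S} {a : A}
    (hU : ∀ P ∈ U s a, (∀ s', 0 ≤ P s') ∧ ∑ s', P s' = 1) {Q₁ Q₂ : S → A → ℝ}
    (hQ : ∀ s a, |Q₁ s a - Q₂ s a| ≤ M) :
    |pessBellman γ r U b Q₁ s a - pessBellman γ r U b Q₂ s a| ≤ γ * M := by
  have hV : ∀ s', |(⨆ a', Q₁ s' a') - ⨆ a', Q₂ s' a'| ≤ M := fun s' =>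
    Real.abs_iSup_sub_iSup_le hM (hQ s')
  have hInf := Real.abs_sInf_image_sub_sInf_image_le (s := U s a) hM fun P hP =>
    Finset.abs_sum_mul_sub_sum_mul_le (fun s' _ => (hU P hP).1 s') (hU P hP).2 fun s' _ => hV s'
  calc |pessBellman γ r U b Q₁ s a - pessBellman γ r U b Q₂ s a|
      ≤ |γ * (sInf ((fun P : S → ℝ => ∑ s', P s' * ⨆ a', Q₁ s' a') '' U s a) -
          sInf ((fun P : S → ℝ => ∑ s', P s' * ⨆ a', Q₂ s' a') '' U s a))| :=
        (abs_sup_sub_sup_le_abs _ _ _).trans_eq (congrArg abs (by ring))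
    _ ≤ γ * M := by
        rw [abs_mul, abs_of_nonneg hγ]
        exact mul_le_mul_of_nonneg_left hInf hγ

theorem pessBellman_contraction_general {S A : Type*} [Fintype S] [Fintype A]
    (γ : ℝ) (hγ0 : 0 ≤ γ)
    (r : S → A → ℝ)
    (U : S → A → Set (S → ℝ))
    (hU : ∀ s a, ∀ P ∈ U s a, (∀ s', 0 ≤ P s') ∧ ∑ s', P s' = 1)
    (b : S → A → ℝ)
    (Q₁ Q₂ : S → A → ℝ) :
    (⨆ p : S × A, |pessBellman γ r U b Q₁ p.1 p.2 - pessBellman γ r U b Q₂ p.1 p.2|) ≤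
      γ * ⨆ p : S × A, |Q₁ p.1 p.2 - Q₂ p.1 p.2| := by
  have hM : 0 ≤ ⨆ p : S × A, |Q₁ p.1 p.2 - Q₂ p.1 p.2| := Real.iSup_nonneg fun _ => abs_nonneg _
  have hQ : ∀ s a, |Q₁ s a - Q₂ s a| ≤ ⨆ p : S × A, |Q₁ p.1 p.2 - Q₂ p.1 p.2| := fun s a =>
    le_ciSup (f := fun p : S × A => |Q₁ p.1 p.2 - Q₂ p.1 p.2|) (finite_range _).bddAbove (s, a)
  exact Real.iSup_le (fun p => abs_pessBellman_sub_le hγ0 hM r U b (hU p.1 p.2) hQ)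
    (mul_nonneg hγ0 hM)

/-- The pessimistic robust Bellman operator is a `γ`-contraction in the sup norm on
functions with values in `[0, 1/(1-γ)]`. -/
theorem pessBellman_contraction {S A : Type*} [Fintype S] [Fintype A]
    [Nonempty S] [Nonempty A]
    (γ : ℝ) (hγ0 : 0 ≤ γ) (hγ1 : γ < 1)
    (r : S → A → ℝ) (hr : ∀ s a, r s a ∈ Set.Icc (0 : ℝ) 1)
    (U : S → A → Set (S → ℝ)) (hUne : ∀ s a, (U s a).Nonempty)
    (hU : ∀ s a, ∀ P ∈ U s a, (∀ s', 0 ≤ P s') ∧ ∑ s', P s' = 1)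
    (b : S → A → ℝ) (hb : ∀ s a, 0 ≤ b s a)
    (Q₁ Q₂ : S → A → ℝ)
    (hQ₁ : ∀ s a, Q₁ s a ∈ Set.Icc 0 (1 / (1 - γ)))
    (hQ₂ : ∀ s a, Q₂ s a ∈ Set.Icc 0 (1 / (1 - γ))) :
    (⨆ p : S × A, |pessBellman γ r U b Q₁ p.1 p.2 - pessBellman γ r U b Q₂ p.1 p.2|) ≤
      γ * ⨆ p : S × A, |Q₁ p.1 p.2 - Q₂ p.1 p.2| :=
  pessBellman_contraction_general γ hγ0 r U hU b Q₁ Q₂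
end
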